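/- arXiv:1910.02736 — 3 statements merged into one kernel-verified Lean document; each statement's English description precedes it below -/
import Mathlib

section
/- Let M be a Turing machine and define the transition system S_M = (ℕ, →_M) where m →_M n holds for all n iff (m = 0 or M does not halt within m steps), and there are no other transitions. Then S_M, ordered by the usual ordering on ℕ, is monotone if and only if M does not halt. -/
/-- S_M with m →_M n for all n iff (m = 0 ∨ M does not halt within m
steps) is monotone iff M does not halt. -/
theorem stmt_3 (H : ℕ → Prop) (hH : ∀ m m', H m → m ≤ m' → H m') :
    (∀ m n m' : ℕ, ((m = 0 ∨ ¬ H m)) → m ≤ m' →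
      ∃ n', n ≤ n' ∧
        Relation.ReflTransGen (fun a _ => a = 0 ∨ ¬ H a) m' n') ↔
    ¬ ∃ m, H m := by
  constructor
  · rintro hmono ⟨m, hm⟩
    have hm1 : H (m + 1) := hH m (m + 1) hm (Nat.le_succ m)
    obtain ⟨n', hn', hr⟩ := hmono 0 (m + 2) (m + 1) (Or.inl rfl) (Nat.zero_le _)
    rcases hr.cases_head with h | ⟨c, hc, _⟩
    · omega
    · rcases hc with h | h
      · omega
      · exact h hm1
  · intro hne m n m' _ hle
    refine ⟨max n m', le_max_left _ _, Relation.ReflTransGen.single ?_⟩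
    exact Or.inr fun h => hne ⟨m', h⟩
end

section
/- Let f(x) = Ax + b be a totally positive affine transition on ℕ^d (A ∈ M_d(ℕ), b ∈ ℕ^d), let N ∈ ℕ, and let f_N : ℕ → ℕ ∪ {ω} map k to k if k ≤ N and to ω otherwise, extended componentwise and to affine arithmetic by 0·ω = 0, k·ω = ω and ω + k = ω for k ≥ 1. Then for all x ∈ ℕ^d, f(applied in the abstract domain)(f_N(x)) = f_N(f(x)): abstraction by f_N commutes with totally positive affine transitions. -/
/-- The abstraction ℕ → ℕ ∪ {ω} : identity on {0, ..., N}, ω above N. -/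
def absN (N : ℕ) (k : ℕ) : ℕ∞ := if k ≤ N then (k : ℕ∞) else ⊤

/-- Normalization in the abstract domain ℕ ∪ {ω} (values > N become ω,
ω stays ω). -/
def normN (N : ℕ) (x : ℕ∞) : ℕ∞ := if x ≤ (N : ℕ∞) then x else ⊤

/-!
Both sides are computed by the normalisation `normN N`, which collapses every value above `N`
to `ω = ⊤`: the abstraction is `absN N k = normN N k`. Since `+` and multiplication by a
constant are monotone and send `⊤` to `⊤` (multiplication by `0` sends everything to `0`),
normalising an argument before an addition or a scalar multiplication does not change the
normalised result. Hence normalising the inputs of the affine map `x ↦ Ax + b` commutes with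
normalising its output.
-/

section Normalization

variable {N : ℕ}

lemma normN_of_le {x : ℕ∞} (h : x ≤ N) : normN N x = x := if_pos h

lemma normN_of_lt {x : ℕ∞} (h : (N : ℕ∞) < x) : normN N x = ⊤ := if_neg h.not_ge

lemma absN_eq_normN (N k : ℕ) : absN N k = normN N k := by
  simp only [absN, normN, Nat.cast_le]

lemma normN_normN_add (x y : ℕ∞) : normN N (normN N x + y) = normN N (x + y) := by
  rcases le_or_gt x N with hx | hx
  · rw [normN_of_le hx]
  · rw [normN_of_lt hx, top_add, normN_of_lt (by simp), normN_of_lt (hx.trans_le le_self_add)]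

lemma normN_add_normN (x y : ℕ∞) : normN N (x + normN N y) = normN N (x + y) := by
  rw [add_comm, normN_normN_add, add_comm]

lemma normN_mul_normN (a x : ℕ∞) : normN N (a * normN N x) = normN N (a * x) := by
  rcases le_or_gt x N with hx | hx
  · rw [normN_of_le hx]
  rcases eq_or_ne a 0 with rfl | ha
  · simp only [zero_mul]
  have hax : x ≤ a * x := le_mul_of_one_le_left' (Order.one_le_iff_ne_zero.mpr ha)
  rw [normN_of_lt hx, ENat.mul_top ha, normN_of_lt (by simp), normN_of_lt (hx.trans_le hax)]

lemma normN_sum_normN {ι : Type*} (s : Finset ι) (f : ι → ℕ∞) :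
    normN N (∑ i ∈ s, normN N (f i)) = normN N (∑ i ∈ s, f i) := by
  classical
  induction s using Finset.induction_on with
  | empty => rfl
  | insert i s hi ih =>
    rw [Finset.sum_insert hi, Finset.sum_insert hi, normN_normN_add, ← normN_add_normN, ih,
      normN_add_normN]

lemma normN_affine_normN {ι : Type*} (s : Finset ι) (a x : ι → ℕ∞) (c : ℕ∞) :
    normN N (∑ j ∈ s, a j * normN N (x j) + c) = normN N (∑ j ∈ s, a j * x j + c) := by
  rw [← normN_normN_add, ← normN_sum_normN]
  simp only [normN_mul_normN]
  rw [normN_sum_normN, normN_normN_add]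

end Normalization

/-- abstraction by f_N commutes with totally positive affine
transitions f(x) = Ax + b: applying f in the abstract domain
ℕ ∪ {ω} (with 0·ω = 0, k·ω = ω for k ≥ 1, ω + k = ω) to f_N(x) gives
f_N(f(x)). -/
theorem stmt_15 (d : ℕ) (A : Matrix (Fin d) (Fin d) ℕ) (b : Fin d → ℕ)
    (N : ℕ) (x : Fin d → ℕ) :
    (fun i => normN N (∑ j, (A i j : ℕ∞) * absN N (x j) + (b i : ℕ∞))) =
    (fun i => absN N (∑ j, A i j * x j + b i)) := by
  funext i
  simp only [absN_eq_normN, normN_affine_normN, Nat.cast_add, Nat.cast_sum, Nat.cast_mul]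
end

section
/- Let ≤ be a quasi ordering on ℕ of the following 'eventually modular' form: there exist N, d ≥ 1 and a set R ⊆ {0,...,d-1}² such that for all m, n ≥ N, m ≤ n iff (m mod d, n mod d) ∈ R. Then ≤ is a well quasi ordering if and only if every infinite sequence of naturals ≥ N that is constant mod d contains an increasing pair, which holds iff for every residue r ∈ {0,...,d-1}, (r, r) ∈ R. -/
/-- an 'eventually modular' quasi ordering on ℕ (determined
mod d on values ≥ N by a relation R on residues) is a wqo iff every infinite
sequence of naturals ≥ N that is constant mod d contains an increasing pair,
which holds iff (r, r) ∈ R for every residue r < d. -/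
theorem stmt_17 (le : ℕ → ℕ → Prop)
    (hrefl : ∀ m, le m m) (htrans : ∀ a b c, le a b → le b c → le a c)
    (N d : ℕ) (hN : 1 ≤ N) (hd : 1 ≤ d)
    (R : Set (ℕ × ℕ)) (hRdom : ∀ p ∈ R, p.1 < d ∧ p.2 < d)
    (hmod : ∀ m n, N ≤ m → N ≤ n → (le m n ↔ (m % d, n % d) ∈ R)) :
    ((∀ f : ℕ → ℕ, ∃ i j : ℕ, i < j ∧ le (f i) (f j)) ↔
      (∀ f : ℕ → ℕ, (∀ i, N ≤ f i) → (∀ i j, f i % d = f j % d) →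
        ∃ i j : ℕ, i < j ∧ le (f i) (f j))) ∧
    ((∀ f : ℕ → ℕ, (∀ i, N ≤ f i) → (∀ i j, f i % d = f j % d) →
        ∃ i j : ℕ, i < j ∧ le (f i) (f j)) ↔
      (∀ r < d, (r, r) ∈ R)) := by
  have hRR : ∀ r < d, (r, r) ∈ R := by
    intro r hr
    have hge : N ≤ d * N + r := le_trans (Nat.le_mul_of_pos_left N hd) (Nat.le_add_right _ _)
    have hm : (d * N + r) % d = r := by
      rw [Nat.mul_add_mod]; exact Nat.mod_eq_of_lt hr
    have := (hmod (d * N + r) (d * N + r) hge hge).mp (hrefl _)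
    rwa [hm] at this
  constructor
  · constructor
    · intro hwqo f _ _; exact hwqo f
    · intro _ f
      set h : ℕ → Fin (N + d) := fun i =>
        if hfi : f i < N then ⟨f i, lt_of_lt_of_le hfi (Nat.le_add_right _ _)⟩
        else ⟨N + f i % d, Nat.add_lt_add_left (Nat.mod_lt _ hd) N⟩ with hh
      have key : ∀ i j, h i = h j → le (f i) (f j) := by
        intro i j heq
        by_cases hi : f i < N <;> by_cases hj : f j < N <;>
          simp only [hh, hi, hj, dif_pos, dif_neg, Fin.mk.injEq, not_false_iff] at heq
        · exact heq ▸ hrefl _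
        · omega
        · omega
        · have hres : f i % d = f j % d := by omega
          refine (hmod _ _ (not_lt.mp hi) (not_lt.mp hj)).mpr ?_
          rw [hres]
          exact hRR _ (Nat.mod_lt _ hd)
      obtain ⟨i, j, hne, heq⟩ := Finite.exists_ne_map_eq_of_infinite h
      rcases hne.lt_or_gt with hlt | hlt
      · exact ⟨i, j, hlt, key i j heq⟩
      · exact ⟨j, i, hlt, key j i heq.symm⟩
  · constructor
    · intro _ r hr; exact hRR r hr
    · intro _ f hf hc
      refine ⟨0, 1, Nat.zero_lt_one, (hmod _ _ (hf 0) (hf 1)).mpr ?_⟩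
      rw [hc 0 1]
      exact hRR _ (Nat.mod_lt _ hd)
end
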